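/- Let T be a bounded operator on a complex separable Hilbert space H belonging to B_1(𝔻), and let M be a closed subspace of H invariant under T, with M ≠ H, such that the spectrum of the restriction T|_M is disjoint from 𝔻. Then the compression P_{M⊥} T|_{M⊥} (equal to (T*|_{M⊥})*) belongs to B_1(𝔻). -/

import Mathlib

open ContinuousLinearMap Submodule

noncomputable section

/-- The Cowen–Douglas class `B_n(Ω)`. -/
def CowenDouglas {H : Type*} [NormedAddCommGroup H] [InnerProductSpace ℂ H]
    (T : H →L[ℂ] H) (Ω : Set ℂ) (n : ℕ) : Prop :=
  (∀ ω ∈ Ω, Function.Surjective (T - ω • (1 : H →L[ℂ] H)) ∧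
      Module.finrank ℂ (LinearMap.ker ((T - ω • (1 : H →L[ℂ] H)) : H →ₗ[ℂ] H)) = n) ∧
  (⨆ ω ∈ Ω, LinearMap.ker ((T - ω • (1 : H →L[ℂ] H)) : H →ₗ[ℂ] H)).topologicalClosure = ⊤

/-!
The orthogonal projection `P` onto `Mᗮ` has kernel `M`, which `T` leaves invariant, so `P`
intertwines `T` with its compression `A`: `P T = A P`. Hence every `A - ω` is surjective, and `P`
maps eigenvectors of `T` to eigenvectors of `A`, so the dense span of the former goes to a dense
subspace of the span of the latter. For `ω ∈ 𝔻` the operator `T - ω` is invertible on `M`, which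
makes `P : ker (T - ω) → ker (A - ω)` bijective, so the eigenspaces of `A` are lines as well.
-/

open Function Set

namespace LinearMap

variable {R E F : Type*} [Ring R] [AddCommGroup E] [Module R E] [AddCommGroup F] [Module R F]
  {f : E →ₗ[R] E} {g : F →ₗ[R] F} {p : E →ₗ[R] F}

theorem map_ker_le_ker_of_comp_eq (h : p ∘ₗ f = g ∘ₗ p) : (ker f).map p ≤ ker g := by
  rintro _ ⟨x, hx, rfl⟩
  rw [SetLike.mem_coe, mem_ker] at hx
  rw [mem_ker, ← comp_apply, ← h, comp_apply, hx, map_zero]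

/-- An eigenvector `v` of `g` lifts to some `x` with `f x ∈ ker p`; subtracting the preimage of
`f x` in `ker p` turns `x` into an eigenvector of `f` over `v`. -/
theorem ker_le_map_ker_of_comp_eq (h : p ∘ₗ f = g ∘ₗ p) (hp : Surjective p)
    (hf : SurjOn f (ker p) (ker p)) : ker g ≤ (ker f).map p := by
  intro v hv
  obtain ⟨x, rfl⟩ := hp v
  have hfx : f x ∈ ker p := by
    rw [mem_ker] at hv ⊢
    rw [← comp_apply, h, comp_apply, hv]
  obtain ⟨m, hm, hmx⟩ := hf hfx
  refine ⟨x - m, ?_, ?_⟩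
  · rw [SetLike.mem_coe, mem_ker, map_sub, hmx, sub_self]
  · rw [map_sub, mem_ker.1 hm, sub_zero]

theorem injective_domRestrict_ker_of_injOn (hf : InjOn f (ker p)) :
    Injective (p.domRestrict (ker f)) := by
  rw [← ker_eq_bot, eq_bot_iff]
  rintro ⟨x, hx⟩ hpx
  rw [Submodule.mem_bot, Submodule.mk_eq_zero]
  exact hf (mem_ker.2 hpx) (zero_mem _) (by rw [map_zero]; exact hx)

theorem finrank_ker_eq_of_comp_eq (h : p ∘ₗ f = g ∘ₗ p) (hp : Surjective p)
    (hf : BijOn f (ker p) (ker p)) : Module.finrank R (ker g) = Module.finrank R (ker f) := by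
  rw [le_antisymm (ker_le_map_ker_of_comp_eq h hp hf.surjOn) (map_ker_le_ker_of_comp_eq h),
    ← range_domRestrict, finrank_range_of_inj (injective_domRestrict_ker_of_injOn hf.injOn)]

end LinearMap

namespace ContinuousLinearMap

variable {𝕜 E F : Type*} [NormedField 𝕜] [NormedAddCommGroup E] [NormedSpace 𝕜 E]
  [NormedAddCommGroup F] [NormedSpace 𝕜 F] {T : E →L[𝕜] E} {A : F →L[𝕜] F} {P : E →L[𝕜] F}

theorem comp_sub_smul_one_eq (h : P ∘L T = A ∘L P) (ω : 𝕜) :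
    P ∘L (T - ω • 1) = (A - ω • 1) ∘L P := by
  ext x
  simp only [comp_apply, sub_apply, smul_apply, one_apply_eq_self, map_sub, map_smul]
  rw [← comp_apply, h, comp_apply]

theorem bijOn_sub_smul_one_of_notMem_spectrum_restrict {M : Submodule 𝕜 E}
    (hT : ∀ x ∈ M, T x ∈ M) {ω : 𝕜} (hω : ω ∉ spectrum 𝕜 (T.restrict hT)) :
    BijOn (T - ω • 1 : E →L[𝕜] E) M M := by
  have hmaps : ∀ x ∈ M, (T - ω • 1 : E →L[𝕜] E) x ∈ M := fun x hx ↦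
    M.sub_mem (hT x hx) (M.smul_mem ω hx)
  have hunit : IsUnit ((T - ω • 1).restrict hmaps) := by
    convert (spectrum.notMem_iff.1 hω).neg using 1
    ext x
    simp [Algebra.algebraMap_eq_smul_one]
  obtain ⟨u, hu⟩ := hunit
  have hbij : Bijective ((T - ω • 1).restrict hmaps) :=
    hu ▸ (ContinuousLinearEquiv.ofUnit u).bijective
  have hmaps' : MapsTo (T - ω • 1 : E →L[𝕜] E) M M := hmaps
  exact ⟨hmaps', hmaps'.restrict_inj.1 hbij.1, hmaps'.restrict_surjective_iff.1 hbij.2⟩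

end ContinuousLinearMap

namespace Submodule

variable {𝕜 E : Type*} [RCLike 𝕜] [NormedAddCommGroup E] [InnerProductSpace 𝕜 E]
  {M : Submodule 𝕜 E} [M.HasOrthogonalProjection]

theorem orthogonalProjectionOnto_surjective : Surjective M.orthogonalProjectionOnto :=
  fun v ↦ ⟨v, orthogonalProjectionOnto_mem_subspace_eq_self v⟩

theorem ker_orthogonalProjectionOnto_orthogonal :
    LinearMap.ker (Mᗮ.orthogonalProjectionOnto : E →ₗ[𝕜] Mᗮ) = M := by
  rw [ker_orthogonalProjectionOnto, orthogonal_orthogonal]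

theorem orthogonalProjectionOnto_comp_subtypeL_comp_eq_restrict {T : E →L[𝕜] E}
    (hT : ∀ x ∈ M, T x ∈ M) :
    M.orthogonalProjectionOnto ∘L T ∘L M.subtypeL = T.restrict hT := by
  ext m
  simp [starProjection_eq_self_iff.2 (hT m m.2)]

/-- The component of `x` in `M` is mapped by `T` into `M`, which the projection onto `Mᗮ`
annihilates. -/
theorem orthogonalProjectionOnto_orthogonal_comp_of_mapsTo {T : E →L[𝕜] E}
    (hT : ∀ x ∈ M, T x ∈ M) :
    Mᗮ.orthogonalProjectionOnto ∘L T =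
      (Mᗮ.orthogonalProjectionOnto ∘L T ∘L Mᗮ.subtypeL) ∘L Mᗮ.orthogonalProjectionOnto := by
  ext x
  have hkill : Mᗮ.orthogonalProjectionOnto (T (M.starProjection x)) = 0 :=
    orthogonalProjectionOnto_apply_of_mem_orthogonal
      (le_orthogonal_orthogonal M (hT _ (M.starProjection_apply_mem x)))
  conv_lhs => rw [← M.starProjection_add_starProjection_orthogonal x]
  simp [hkill]

end Submodule

theorem CowenDouglas.of_comp_eq {E F : Type*} [NormedAddCommGroup E] [InnerProductSpace ℂ E]
    [NormedAddCommGroup F] [InnerProductSpace ℂ F] {T : E →L[ℂ] E} {A : F →L[ℂ] F} {Ω : Set ℂ}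
    {n : ℕ} (P : E →L[ℂ] F) (hP : Surjective P) (h : P ∘L T = A ∘L P)
    (hbij : ∀ ω ∈ Ω, BijOn (T - ω • 1 : E →L[ℂ] E) (LinearMap.ker (P : E →ₗ[ℂ] F))
      (LinearMap.ker (P : E →ₗ[ℂ] F)))
    (hT : CowenDouglas T Ω n) : CowenDouglas A Ω n := by
  -- the ascription is elaborated as in `CowenDouglas`, to `↑T - ω • ↑1` rather than `↑(T - ω • 1)`
  have hω (ω : ℂ) : (P : E →ₗ[ℂ] F) ∘ₗ ((T - ω • (1 : E →L[ℂ] E)) : E →ₗ[ℂ] E) =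
      ((A - ω • (1 : F →L[ℂ] F)) : F →ₗ[ℂ] F) ∘ₗ (P : E →ₗ[ℂ] F) := by
    ext x
    exact congr($(comp_sub_smul_one_eq h ω) x)
  refine ⟨fun ω hmem ↦ ⟨?_, ?_⟩, ?_⟩
  · refine Surjective.of_comp (g := P) ?_
    rw [← coe_comp, ← comp_sub_smul_one_eq h]
    exact hP.comp (hT.1 ω hmem).1
  · rw [← (hT.1 ω hmem).2]
    exact LinearMap.finrank_ker_eq_of_comp_eq (hω ω) hP (hbij ω hmem)
  · have hdense := Submodule.dense_iff_topologicalClosure_eq_top.2 hT.2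
    rw [← Submodule.dense_iff_topologicalClosure_eq_top]
    refine (hP.denseRange.dense_image P.continuous hdense).mono
      (SetLike.coe_subset_coe.2 (?_ : Submodule.map (P : E →ₗ[ℂ] F) _ ≤ _))
    simp only [Submodule.map_iSup]
    exact iSup₂_mono fun ω _ ↦ LinearMap.map_ker_le_ker_of_comp_eq (hω ω)

theorem stmt_16_general {H : Type*} [NormedAddCommGroup H] [InnerProductSpace ℂ H]
    (T : H →L[ℂ] H) (hT : CowenDouglas T (Metric.ball (0 : ℂ) 1) 1)
    (M : Submodule ℂ H) [CompleteSpace M]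
    (hinv : ∀ x ∈ M, T x ∈ M)
    (hspec : spectrum ℂ ((orthogonalProjection M).comp (T.comp M.subtypeL)) ∩
      Metric.ball (0 : ℂ) 1 = ∅) :
    CowenDouglas ((orthogonalProjection Mᗮ).comp (T.comp Mᗮ.subtypeL))
      (Metric.ball (0 : ℂ) 1) 1 := by
  refine hT.of_comp_eq _ orthogonalProjectionOnto_surjective
    (orthogonalProjectionOnto_orthogonal_comp_of_mapsTo hinv) fun ω hω ↦ ?_
  rw [ker_orthogonalProjectionOnto_orthogonal]
  refine bijOn_sub_smul_one_of_notMem_spectrum_restrict hinv fun hmem ↦ ?_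
  rw [← orthogonalProjectionOnto_comp_subtypeL_comp_eq_restrict hinv] at hmem
  exact hspec.subset ⟨hmem, hω⟩

theorem stmt_16 {H : Type*} [NormedAddCommGroup H] [InnerProductSpace ℂ H]
    [CompleteSpace H] [TopologicalSpace.SeparableSpace H]
    (T : H →L[ℂ] H) (hT : CowenDouglas T (Metric.ball (0 : ℂ) 1) 1)
    (M : Submodule ℂ H) [CompleteSpace M] (hM : M ≠ ⊤)
    (hinv : ∀ x ∈ M, T x ∈ M)
    (hspec : spectrum ℂ ((orthogonalProjection M).comp (T.comp M.subtypeL)) ∩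
      Metric.ball (0 : ℂ) 1 = ∅) :
    CowenDouglas ((orthogonalProjection Mᗮ).comp (T.comp Mᗮ.subtypeL))
      (Metric.ball (0 : ℂ) 1) 1 :=
  stmt_16_general T hT M hinv hspec
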